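/- arXiv:1703.04140 — 2 statements merged into one kernel-verified Lean document; each statement's English description precedes it below -/
import Mathlib

section
/- (Proposition 3.1 of the paper) Let G_j be a finite additive commutative group, let V_{j+1}, …, V_{J−1} be finite additive commutative groups, and set G_{k+1} = G_k × V_{k+1} for j ≤ k < J−1. Let ρ : ℝ → ℝ be any function and, for each j < k ≤ J−1, let w_k : V_k → (G_{k−1} → ℝ) be a family of filters indexed by the new attribute; define the layer map T_k sending z : G_{k−1} → ℝ to T_k z : G_k → ℝ with T_k z (g, v) = ρ((z ⋆ w_k(v))(g)), where ⋆ is the discrete convolution on G_{k−1}. Let Ψ = T_{J−1} ∘ ⋯ ∘ T_{j+1}. Then the final summed layer is invariant to translations of the j-th layer along all of its indices: for every z : G_j → ℝ and every τ ∈ G_j, ∑_{g ∈ G_{J−1}} Ψ(g' ↦ z(g' − τ))(g) = ∑_{g ∈ G_{J−1}} Ψ(z)(g). -/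
/-- Discrete convolution of two real-valued functions on a finite additive
commutative group: `(z ⋆ w)(g) = ∑_{h ∈ G} z(g − h)·w(h)`. -/
def dconv {G : Type} [AddCommGroup G] [Fintype G] (z w : G → ℝ) (g : G) : ℝ :=
  ∑ h : G, z (g - h) * w h

/-- The chain of index groups of a multiscale hierarchical network:
`G_0` is the base group and `G_{k+1} = G_k × V_k`, where `V_k` indexes the new
attribute introduced at the `(k+1)`-st layer. -/
def Gchain (G0 : Type) (V : ℕ → Type) : ℕ → Type
  | 0 => G0
  | k + 1 => Gchain G0 V k × V k

instance instGchainAddCommGroup (G0 : Type) (V : ℕ → Type) [AddCommGroup G0]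
    [∀ k, AddCommGroup (V k)] : ∀ k, AddCommGroup (Gchain G0 V k)
  | 0 => inferInstanceAs (AddCommGroup G0)
  | k + 1 =>
      letI := instGchainAddCommGroup G0 V k
      inferInstanceAs (AddCommGroup (Gchain G0 V k × V k))

instance instGchainFintype (G0 : Type) (V : ℕ → Type) [Fintype G0]
    [∀ k, Fintype (V k)] : ∀ k, Fintype (Gchain G0 V k)
  | 0 => inferInstanceAs (Fintype G0)
  | k + 1 =>
      letI := instGchainFintype G0 V k
      inferInstanceAs (Fintype (Gchain G0 V k × V k))

/-- One layer of a hierarchical network: `T z (g, v) = ρ((z ⋆ w_v)(g))`. -/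
def hlayer {A : Type} [AddCommGroup A] [Fintype A] {B : Type}
    (ρ : ℝ → ℝ) (w : B → A → ℝ) (z : A → ℝ) : A × B → ℝ :=
  fun p => ρ (dconv z (w p.2) p.1)

/-- The cascade `Ψ_m = T_m ∘ ⋯ ∘ T_1` of `m` hierarchical layers started from
functions on `G0`, where layer `k+1` uses the family of filters `w k` on
`Gchain G0 V k` indexed by the new attribute in `V k`. -/
def Psi (G0 : Type) (V : ℕ → Type) [AddCommGroup G0] [Fintype G0]
    [∀ k, AddCommGroup (V k)] [∀ k, Fintype (V k)]
    (ρ : ℝ → ℝ) (w : ∀ k, V k → Gchain G0 V k → ℝ) :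
    ∀ m, (G0 → ℝ) → Gchain G0 V m → ℝ
  | 0 => id
  | m + 1 => fun z => hlayer ρ (w m) (Psi G0 V ρ w m z)

/-- Embedding of a translation of `G0` into `Gchain G0 V m` by padding with zeros. -/
def Gemb (G0 : Type) (V : ℕ → Type) [AddCommGroup G0] [∀ k, AddCommGroup (V k)] :
    ∀ m, G0 → Gchain G0 V m
  | 0 => id
  | m + 1 => fun τ => (Gemb G0 V m τ, 0)

lemma dconv_translate {G : Type} [AddCommGroup G] [Fintype G] (z w : G → ℝ)
    (τ g : G) : dconv (fun g' => z (g' - τ)) w g = dconv z w (g - τ) := by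
  unfold dconv
  refine Finset.sum_congr rfl fun h _ => ?_
  rw [sub_right_comm]

lemma Psi_translate (G0 : Type) [AddCommGroup G0] [Fintype G0]
    (V : ℕ → Type) [∀ k, AddCommGroup (V k)] [∀ k, Fintype (V k)]
    (ρ : ℝ → ℝ) (w : ∀ k, V k → Gchain G0 V k → ℝ) (z : G0 → ℝ) (τ : G0) :
    ∀ m, Psi G0 V ρ w m (fun g' => z (g' - τ))
      = fun g => Psi G0 V ρ w m z (g - Gemb G0 V m τ)
  | 0 => rfl
  | m + 1 => by
    funext p
    show hlayer ρ (w m) (Psi G0 V ρ w m (fun g' => z (g' - τ))) p = _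
    rw [Psi_translate G0 V ρ w z τ m]
    show ρ (dconv (fun g => Psi G0 V ρ w m z (g - Gemb G0 V m τ)) (w m p.2) p.1) = _
    rw [dconv_translate]
    obtain ⟨g, v⟩ := p
    show ρ (dconv (Psi G0 V ρ w m z) (w m v) (g - Gemb G0 V m τ))
      = ρ (dconv (Psi G0 V ρ w m z) (w m (v - 0)) (g - Gemb G0 V m τ))
    rw [sub_zero]

/-- Proposition 3.1: the final summed layer `x_J(v_{J-1}) = ∑ x_{J-1}` is
invariant to translations of the `j`-th layer along all of its indices
`(u, v_1, …, v_j)`.  Here the `j`-th layer lives on the finite additive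
commutative group `G0 = G_j`, the cascade `Ψ = T_{J-1} ∘ ⋯ ∘ T_{j+1}` applies
the `J - 1 - j` layers introducing the attributes `V_{j+1}, …, V_{J-1}`, and
the output is summed over the whole group `G_{J-1}`. -/
theorem sum_lastLayer_invariant (G0 : Type) [AddCommGroup G0] [Fintype G0]
    (V : ℕ → Type) [∀ k, AddCommGroup (V k)] [∀ k, Fintype (V k)]
    (ρ : ℝ → ℝ) (w : ∀ k, V k → Gchain G0 V k → ℝ)
    (j J : ℕ) (hjJ : j < J - 1) (z : G0 → ℝ) (τ : G0) :
    ∑ g : Gchain G0 V (J - 1 - j), Psi G0 V ρ w (J - 1 - j) (fun g' => z (g' - τ)) g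
      = ∑ g : Gchain G0 V (J - 1 - j), Psi G0 V ρ w (J - 1 - j) z g := by
  rw [Psi_translate]
  exact Fintype.sum_equiv (Equiv.subRight (Gemb G0 V (J - 1 - j) τ)) _ _ fun g => rfl
end

section
/- Let r_θ denote the rotation of the Euclidean plane EuclideanSpace ℝ (Fin 2) by angle θ, let w : EuclideanSpace ℝ (Fin 2) → ℝ be a filter, and define the rotated filters w_θ(u) = w(r_{−θ} u). Let ρ : ℝ → ℝ, let x : EuclideanSpace ℝ (Fin 2) → ℝ, and define the first layer x_1(u, θ) = ρ((x ⋆ w_θ)(u)), where ⋆ is convolution with respect to Lebesgue measure. Then for all angles θ, τ and all u, x_1(u, θ − τ) = ρ((x_τ ⋆ w_θ)(r_τ u)), where x_τ(u) = x(r_{−τ} u) is the rotated input image. -/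
open MeasureTheory

/-- Convolution of two real-valued functions on the Euclidean plane with
respect to Lebesgue measure: `(f ⋆ w)(u) = ∫ f(u − y)·w(y) dy`. -/
noncomputable def planeConv (f w : EuclideanSpace ℝ (Fin 2) → ℝ)
    (u : EuclideanSpace ℝ (Fin 2)) : ℝ :=
  ∫ y, f (u - y) * w y

/-- For rotated filters `w_θ(u) = w(r_{−θ} u)` and the first layer
`x₁(u, θ) = ρ((x ⋆ w_θ)(u))`, a translation of the rotation-angle attribute
satisfies `x₁(u, θ − τ) = ρ((x_τ ⋆ w_θ)(r_τ u))`, where `x_τ(u) = x(r_{−τ} u)`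
is the rotated input image: it is a rotation of the input combined with a
rotation of the spatial evaluation point. -/
theorem firstLayer_angle_translation
    [Fact (Module.finrank ℝ (EuclideanSpace ℝ (Fin 2)) = 2)]
    (o : Orientation ℝ (EuclideanSpace ℝ (Fin 2)) (Fin 2))
    (w x : EuclideanSpace ℝ (Fin 2) → ℝ) (ρ : ℝ → ℝ)
    (θ τ : Real.Angle) (u : EuclideanSpace ℝ (Fin 2)) :
    let r : Real.Angle → EuclideanSpace ℝ (Fin 2) → EuclideanSpace ℝ (Fin 2) :=
      fun ψ v => o.rotation ψ v
    let wrot : Real.Angle → EuclideanSpace ℝ (Fin 2) → ℝ :=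
      fun ψ v => w (r (-ψ) v)
    let x₁ : EuclideanSpace ℝ (Fin 2) → Real.Angle → ℝ :=
      fun v ψ => ρ (planeConv x (wrot ψ) v)
    let xτ : EuclideanSpace ℝ (Fin 2) → ℝ := fun v => x (r (-τ) v)
    x₁ u (θ - τ) = ρ (planeConv xτ (wrot θ) (r τ u)) := by
  intro r wrot x₁ xτ
  have key : planeConv x (wrot (θ - τ)) u = planeConv xτ (wrot θ) (r τ u) := by
    unfold planeConv
    rw [← (o.rotation τ).measurePreserving.integral_comp
      (o.rotation τ).toHomeomorph.measurableEmbedding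
      (fun y => xτ (r τ u - y) * wrot θ y)]
    congr 1
    ext y
    simp only [wrot, xτ, r]
    rw [show (o.rotation τ) u - (o.rotation τ) y = o.rotation τ (u - y) by
      simp [map_sub]]
    rw [Orientation.rotation_rotation, Orientation.rotation_rotation]
    rw [show -τ + τ = (0 : Real.Angle) by abel, o.rotation_zero,
      show -θ + τ = -(θ - τ) by abel]
    rfl
  simp only [x₁, key]
end
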